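/- Let N = p^k · m^2 be an odd perfect number, where p is a prime with p ≡ k ≡ 1 (mod 4) and gcd(p, m) = 1. Then m^2 - p^k ≥ 8. -/

import Mathlib

/-!
Write `σ(m²) = p^k t`. Multiplicativity of `σ` and `gcd(p, σ(p^k)) = 1` give
`σ(p^k) t = 2m²`, and since `σ(p^k)` is even while `m` is odd, `t` is odd.
The heart of the proof is `t ≠ 1`. If `σ(m²) = p^k` and `k = 2v + 1`, then
`σ(p^k) = A (p^(v+1) + 1)` with `A = 1 + p + ⋯ + p^v`, so `m² = A c` with
`2c = p^(v+1) + 1` and `A`, `c` coprime; hence `A = a²`, `c = b²` and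
`σ(a²) σ(b²) = p^k`. For `v ≥ 1`, `σ(b²) > b²` forces `σ(b²) ≥ p^(v+1)`, leaving
`σ(a²) ≤ p^v < a²`, which is impossible. For `v = 0`, `σ(m²) = p` is prime, so every
prime `r ∣ m` divides `p - 1`; it also divides `p + 1 = 2m²`, so `r = 2`, contradicting
that `m` is odd. Thus `t ≥ 3`, and `2m² ≥ 3(p^k + 1)` gives the bound, except when
`p^k = 5`, `m = 3`, which is excluded because `45` is not perfect.
-/

open ArithmeticFunction Finset
open scoped ArithmeticFunction.sigma

theorem geom_sum_two_mul {R : Type*} [CommSemiring R] (x : R) (u : ℕ) :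
    ∑ i ∈ range (2 * u), x ^ i = (∑ i ∈ range u, x ^ i) * (x ^ u + 1) := by
  rw [two_mul, sum_range_add, mul_add, mul_one, sum_mul, add_comm]
  simp only [pow_add, mul_comm]

theorem le_sigma_one (n : ℕ) : n ≤ σ 1 n := by
  rw [sigma_one_apply, Nat.sum_divisors_eq_sum_properDivisors_add_self]
  omega

theorem lt_sigma_one {n : ℕ} (hn : 1 < n) : n < σ 1 n := by
  rw [sigma_one_apply, Nat.sum_divisors_eq_sum_properDivisors_add_self]
  have := single_le_sum (fun i _ => Nat.zero_le i) (Nat.one_mem_properDivisors_iff_one_lt.mpr hn)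
  omega

theorem sigma_one_prime_pow_mod {p : ℕ} (hp : p.Prime) (k : ℕ) : σ 1 (p ^ k) % p = 1 := by
  rw [sigma_one_apply_prime_pow hp, sum_range_succ', pow_zero]
  obtain ⟨w, hw⟩ : p ∣ ∑ i ∈ range k, p ^ (i + 1) :=
    dvd_sum fun i _ => dvd_pow_self p i.succ_ne_zero
  rw [hw, Nat.mul_add_mod, Nat.mod_eq_of_lt hp.one_lt]

theorem sigma_one_prime_pow_two_mul_add_one {p : ℕ} (hp : p.Prime) (v : ℕ) :
    σ 1 (p ^ (2 * v + 1)) = (∑ i ∈ range (v + 1), p ^ i) * (p ^ (v + 1) + 1) := by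
  rw [sigma_one_apply_prime_pow hp, ← geom_sum_two_mul, mul_add, mul_one]

theorem even_sigma_one_prime_pow {p k : ℕ} (hp : p.Prime) (hpo : Odd p) (hk : Odd k) :
    Even (σ 1 (p ^ k)) := by
  obtain ⟨v, rfl⟩ := hk
  rw [sigma_one_prime_pow_two_mul_add_one hp]
  exact hpo.pow.add_one.mul_left _

theorem sigma_one_mod_eq_one_of_dvd_of_prime {n r : ℕ} (hr : r.Prime) (hrn : r ∣ n)
    (hn : n ≠ 0) (hσ : (σ 1 n).Prime) : σ 1 n % r = 1 := by
  have hsplit : σ 1 n = σ 1 (r ^ n.factorization r) * σ 1 (ordCompl[r] n) := by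
    rw [← isMultiplicative_sigma.map_mul_of_coprime ((Nat.coprime_ordCompl hr hn).pow_left _),
      Nat.ordProj_mul_ordCompl_eq_self]
  have hpow : 1 < r ^ n.factorization r :=
    Nat.one_lt_pow (hr.factorization_pos_of_dvd hn hrn).ne' hr.one_lt
  have hσpow := lt_sigma_one hpow
  rw [hsplit] at hσ ⊢
  rcases Nat.prime_mul_iff.mp hσ with ⟨-, h⟩ | ⟨-, h⟩
  · rw [h, mul_one]
    exact sigma_one_prime_pow_mod hr _
  · omega

theorem two_mul_sq_ne_succ_of_sigma_sq_eq_prime {p m : ℕ} (hp : p.Prime) (hm : Odd m)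
    (hσ : σ 1 (m ^ 2) = p) : 2 * m ^ 2 ≠ p + 1 := by
  intro h
  have hm1 : m ≠ 1 := by
    rintro rfl
    exact hp.one_lt.ne (by simpa using hσ)
  set r := m.minFac
  have hr : r.Prime := Nat.minFac_prime hm1
  have hrm : r ∣ m ^ 2 := (Nat.minFac_dvd m).trans (dvd_pow_self m two_ne_zero)
  have hmod :=
    sigma_one_mod_eq_one_of_dvd_of_prime hr hrm (by positivity [hm.pos]) (hσ ▸ hp)
  rw [hσ] at hmod
  have hr_sub : r ∣ p - 1 := hmod ▸ Nat.dvd_sub_mod p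
  have hr_add : r ∣ p + 1 := h ▸ hrm.mul_left 2
  have hr2 : r = 2 := by
    refine (Nat.prime_dvd_prime_iff_eq hr Nat.prime_two).mp ?_
    simpa [show p + 1 - (p - 1) = 2 by omega] using Nat.dvd_sub hr_add hr_sub
  exact Nat.not_even_iff_odd.mpr hm (even_iff_two_dvd.mpr (hr2 ▸ Nat.minFac_dvd m))

theorem exists_sq_of_sigma_prime_pow_eq_two_mul_sq {p v m : ℕ} (hp : p.Prime) (hpo : Odd p)
    (hm : Odd m) (h : σ 1 (p ^ (2 * v + 1)) = 2 * m ^ 2) :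
    ∃ a b, a.Coprime b ∧ a ^ 2 = ∑ i ∈ range (v + 1), p ^ i ∧
      2 * b ^ 2 = p ^ (v + 1) + 1 ∧ m = a * b := by
  obtain ⟨c, hc⟩ : ∃ c, p ^ (v + 1) + 1 = 2 * c := even_iff_two_dvd.mp hpo.pow.add_one
  rw [sigma_one_prime_pow_two_mul_add_one hp, hc] at h
  set A := ∑ i ∈ range (v + 1), p ^ i
  have hAc : A * c = m ^ 2 := by linarith
  have hA : Odd A := (Nat.odd_mul.mp (hAc ▸ hm.pow)).1
  have hgeom : A * (p - 1) + 1 = p ^ (v + 1) := by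
    simpa [Nat.sub_add_cancel hp.one_le] using geom_sum_mul_add (p - 1) (v + 1)
  have hcop : A.Coprime c := by
    have : A.Coprime (A * (p - 1) + 2) := by
      rw [Nat.coprime_mul_left_add_right]
      exact Nat.coprime_two_right.mpr hA
    exact Nat.Coprime.coprime_mul_left_right (by rwa [← hc, ← hgeom])
  obtain ⟨a, ha⟩ := exists_eq_pow_of_mul_eq_pow (Nat.isUnit_iff.mpr hcop) hAc
  obtain ⟨b, hb⟩ :=
    exists_eq_pow_of_mul_eq_pow (Nat.isUnit_iff.mpr hcop.symm) ((mul_comm c A).trans hAc)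
  refine ⟨a, b, ?_, ha.symm, by rw [← hb, hc], ?_⟩
  · rw [← Nat.coprime_pow_left_iff two_pos, ← Nat.coprime_pow_right_iff two_pos, ← ha,
      ← hb]
    exact hcop
  · exact Nat.pow_left_injective two_ne_zero
      (show m ^ 2 = (a * b) ^ 2 by rw [mul_pow, ← ha, ← hb, hAc])

theorem sigma_sq_mul_sigma_sq_ne_prime_pow {p v a b : ℕ} (hp : p.Prime) (hv : 1 ≤ v)
    (ha : a ^ 2 = ∑ i ∈ range (v + 1), p ^ i) (hb : 2 * b ^ 2 = p ^ (v + 1) + 1) :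
    σ 1 (a ^ 2) * σ 1 (b ^ 2) ≠ p ^ (2 * v + 1) := by
  intro h
  obtain ⟨β, -, hβ⟩ := (Nat.dvd_prime_pow hp).mp (Dvd.intro_left _ h)
  have hb_lt : b ^ 2 < σ 1 (b ^ 2) := by
    have := Nat.one_lt_pow (n := v + 1) (by omega) hp.one_lt
    exact lt_sigma_one (by omega)
  have hβv : v + 1 ≤ β := by
    by_contra! hβ'
    have : 2 * p ^ β ≤ p ^ (v + 1) :=
      calc 2 * p ^ β ≤ p * p ^ β := by gcongr; exact hp.two_le
        _ = p ^ (β + 1) := by ring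
        _ ≤ p ^ (v + 1) := Nat.pow_le_pow_right hp.pos hβ'
    omega
  have hσa : σ 1 (a ^ 2) ≤ p ^ v := by
    refine Nat.le_of_mul_le_mul_right ?_ (pow_pos hp.pos (v + 1))
    calc σ 1 (a ^ 2) * p ^ (v + 1) ≤ σ 1 (a ^ 2) * σ 1 (b ^ 2) := by
          rw [hβ]; gcongr; exact hp.one_le
      _ = p ^ v * p ^ (v + 1) := by rw [h, ← pow_add]; ring_nf
  have ha_gt : p ^ v < a ^ 2 := by
    rw [ha, sum_range_succ]
    have : 0 < ∑ i ∈ range v, p ^ i :=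
      sum_pos (fun i _ => pow_pos hp.pos i) (nonempty_range_iff.mpr (by omega))
    omega
  have := le_sigma_one (a ^ 2)
  omega

theorem sigma_sq_ne_prime_pow {p k m : ℕ} (hp : p.Prime) (hpo : Odd p) (hk : Odd k) (hm : Odd m)
    (h : σ 1 (p ^ k) = 2 * m ^ 2) : σ 1 (m ^ 2) ≠ p ^ k := by
  obtain ⟨v, rfl⟩ := hk
  obtain ⟨a, b, hab, ha, hb, rfl⟩ := exists_sq_of_sigma_prime_pow_eq_two_mul_sq hp hpo hm h
  rw [mul_pow, isMultiplicative_sigma.map_mul_of_coprime (hab.pow 2 2)]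
  rcases Nat.eq_zero_or_pos v with rfl | hv
  · obtain rfl : a = 1 := by simpa using ha
    simp only [one_mul, one_pow, sigma_one, mul_zero, zero_add, pow_one] at hb hm ⊢
    exact fun hσ => two_mul_sq_ne_succ_of_sigma_sq_eq_prime hp hm hσ hb
  · exact sigma_sq_mul_sigma_sq_ne_prime_pow hp hv ha hb

theorem exists_sigma_sq_eq_pow_mul_of_perfect {p k m : ℕ} (hp : p.Prime) (hcop : p.Coprime m)
    (hperf : (p ^ k * m ^ 2).Perfect) :
    ∃ t, σ 1 (m ^ 2) = p ^ k * t ∧ σ 1 (p ^ k) * t = 2 * m ^ 2 := by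
  have hσ : σ 1 (p ^ k) * σ 1 (m ^ 2) = p ^ k * (2 * m ^ 2) := by
    rw [← isMultiplicative_sigma.map_mul_of_coprime (hcop.pow k 2), sigma_one_apply,
      (Nat.perfect_iff_sum_divisors_eq_two_mul hperf.2).mp hperf]
    ring
  have hcop' : (p ^ k).Coprime (σ 1 (p ^ k)) :=
    (hp.coprime_iff_not_dvd.mpr
      (by simp [Nat.dvd_iff_mod_eq_zero, sigma_one_prime_pow_mod hp])).pow_left k
  obtain ⟨t, ht⟩ := hcop'.dvd_of_dvd_mul_left (Dvd.intro _ hσ.symm)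
  refine ⟨t, ht, Nat.eq_of_mul_eq_mul_left (pow_pos hp.pos k) ?_⟩
  rw [← hσ, ht]
  ring

theorem odd_of_sigma_prime_pow_mul_eq_two_mul_sq {p k m t : ℕ} (hp : p.Prime) (hpo : Odd p)
    (hk : Odd k) (hm : Odd m) (h : σ 1 (p ^ k) * t = 2 * m ^ 2) : Odd t := by
  obtain ⟨s, hs⟩ := even_iff_two_dvd.mp (even_sigma_one_prime_pow hp hpo hk)
  have hst : s * t = m ^ 2 := by
    rw [hs] at h
    linarith
  exact (Nat.odd_mul.mp (hst ▸ hm.pow)).2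

theorem not_perfect_forty_five : ¬ Nat.Perfect 45 := by
  rw [Nat.perfect_iff_sum_divisors_eq_two_mul (by norm_num)]
  decide

theorem add_eight_le_sq {p k m : ℕ} (hp5 : 5 ≤ p) (hk4 : k % 4 = 1) (hm : Odd m)
    (hperf : (p ^ k * m ^ 2).Perfect) (hbound : (p ^ k + 1) * 3 ≤ 2 * m ^ 2) :
    p ^ k + 8 ≤ m ^ 2 := by
  obtain hbig | hsmall := le_or_gt 13 (p ^ k)
  · omega
  obtain rfl : k = 1 := by
    by_contra hk1
    have : p ^ 2 ≤ p ^ k := Nat.pow_le_pow_right (by omega) (by omega)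
    nlinarith
  rw [pow_one] at hsmall hbound hperf ⊢
  have hm3 : 2 < m := lt_of_pow_lt_pow_left₀ 2 (by positivity) (by omega : 2 ^ 2 < m ^ 2)
  obtain rfl | hm5 : m = 3 ∨ 5 ≤ m := by
    obtain ⟨j, rfl⟩ := hm
    omega
  · obtain rfl : p = 5 := by omega
    exact absurd hperf not_perfect_forty_five
  · nlinarith

theorem stmt_15 (p k m : ℕ) (hp : p.Prime) (hp4 : p % 4 = 1) (hk4 : k % 4 = 1)
    (hcop : Nat.Coprime p m) (hodd : Odd (p ^ k * m ^ 2))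
    (hperf : Nat.Perfect (p ^ k * m ^ 2)) :
    (m : ℤ) ^ 2 - (p : ℤ) ^ k ≥ 8 := by
  have hp5 : 5 ≤ p := by
    have := hp.two_le
    omega
  have hpo : Odd p := Nat.odd_iff.mpr (by omega)
  have hk : Odd k := Nat.odd_iff.mpr (by omega)
  have hm : Odd m := (Nat.odd_pow_iff two_ne_zero).mp (Nat.odd_mul.mp hodd).2
  obtain ⟨t, hσm, hσp⟩ := exists_sigma_sq_eq_pow_mul_of_perfect hp hcop hperf
  have ht1 : t ≠ 1 := by
    rintro rfl
    exact sigma_sq_ne_prime_pow hp hpo hk hm (by simpa using hσp) (by simpa using hσm)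
  have ht3 : 3 ≤ t := by
    obtain ⟨j, rfl⟩ := odd_of_sigma_prime_pow_mul_eq_two_mul_sq hp hpo hk hm hσp
    omega
  have hbound : (p ^ k + 1) * 3 ≤ 2 * m ^ 2 :=
    hσp ▸ Nat.mul_le_mul (lt_sigma_one (Nat.one_lt_pow (by omega) hp.one_lt)) ht3
  have hsq := add_eight_le_sq hp5 hk4 hm hperf hbound
  zify at hsq
  linarith
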